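/- arXiv:2408.13540 — 2 statements merged into one kernel-verified Lean document; each statement's English description precedes it below -/
import Mathlib

section
/- For simple FDs, the TCAND problem reduces exactly to Set Cover: a set X ⊆ V satisfies T ⊆ X⁺ if and only if the collection {Reach(v) ∩ T : v ∈ X} covers T, and the minimum cardinality of a TCAND solution equals the minimum number of sets of the form Reach(v) ∩ T (v ∈ V) needed to cover T. -/
/-- Closure for a simple set of FDs. -/
def simpleClosure {V : Type*} (F : Set (V × V)) (X : Set V) : Set V :=
  ⋂₀ {S : Set V | X ⊆ S ∧ ∀ p ∈ F, p.1 ∈ S → p.2 ∈ S}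

/-- Reachability set of `v` in the FD-graph. -/
def reach {V : Type*} (F : Set (V × V)) (v : V) : Set V :=
  {x | Relation.ReflTransGen (fun i j => (i, j) ∈ F) v x}

lemma simpleClosure_eq_biUnion_reach {V : Type*} (F : Set (V × V)) (X : Set V) :
    simpleClosure F X = ⋃ v ∈ X, reach F v := by
  apply le_antisymm
  · apply Set.sInter_subset_of_mem
    constructor
    · intro v hv
      exact Set.mem_biUnion hv Relation.ReflTransGen.refl
    · rintro ⟨i, j⟩ hp hi
      simp only [Set.mem_iUnion] at hi ⊢
      obtain ⟨v, hv, hvi⟩ := hi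
      exact ⟨v, hv, hvi.tail hp⟩
  · intro x hx
    simp only [Set.mem_iUnion] at hx
    obtain ⟨v, hv, hvx⟩ := hx
    intro S hS
    induction hvx with
    | refl => exact hS.1 hv
    | tail _ h ih => exact hS.2 _ h ih

/-- For simple FDs, TCAND reduces exactly to Set Cover: `X` is feasible iff the sets
`Reach(v) ∩ T`, `v ∈ X`, cover `T`, and the minimum cardinality of a TCAND solution
equals the minimum number of sets of the form `Reach(v) ∩ T` needed to cover `T`. -/
theorem stmt6 {V : Type*} [Fintype V] (F : Set (V × V)) (hF : F.Finite)
    (T : Set V) (hfeas : T ⊆ simpleClosure F Set.univ) :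
    (∀ X : Set V, T ⊆ simpleClosure F X ↔ T ⊆ ⋃ v ∈ X, reach F v) ∧
    sInf {k | ∃ X : Set V, X.ncard = k ∧ T ⊆ simpleClosure F X} =
      sInf {k | ∃ 𝒞 : Set (Set V), 𝒞.ncard = k ∧
        (∀ A ∈ 𝒞, ∃ v : V, A = reach F v ∩ T) ∧ T ⊆ ⋃₀ 𝒞} := by
  have hiff : ∀ X : Set V, T ⊆ simpleClosure F X ↔ T ⊆ ⋃ v ∈ X, reach F v := by
    intro X; rw [simpleClosure_eq_biUnion_reach]
  refine ⟨hiff, ?_⟩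
  -- forward map: from X produce a cover
  have h1 : ∀ k ∈ {k | ∃ X : Set V, X.ncard = k ∧ T ⊆ simpleClosure F X},
      ∃ k' ∈ {k | ∃ 𝒞 : Set (Set V), 𝒞.ncard = k ∧
        (∀ A ∈ 𝒞, ∃ v : V, A = reach F v ∩ T) ∧ T ⊆ ⋃₀ 𝒞}, k' ≤ k := by
    rintro k ⟨X, rfl, hX⟩
    refine ⟨((fun v => reach F v ∩ T) '' X).ncard, ⟨_, rfl, ?_, ?_⟩, ?_⟩
    · rintro A ⟨v, hv, rfl⟩; exact ⟨v, rfl⟩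
    · intro x hx
      have := (hiff X).1 hX hx
      simp only [Set.mem_iUnion] at this
      obtain ⟨v, hv, hvx⟩ := this
      exact ⟨reach F v ∩ T, ⟨v, hv, rfl⟩, hvx, hx⟩
    · exact Set.ncard_image_le (X.toFinite)
  have h2 : ∀ k ∈ {k | ∃ 𝒞 : Set (Set V), 𝒞.ncard = k ∧
        (∀ A ∈ 𝒞, ∃ v : V, A = reach F v ∩ T) ∧ T ⊆ ⋃₀ 𝒞},
      ∃ k' ∈ {k | ∃ X : Set V, X.ncard = k ∧ T ⊆ simpleClosure F X}, k' ≤ k := by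
    rintro k ⟨𝒞, rfl, h𝒞, hcov⟩
    choose f hf using h𝒞
    refine ⟨(Set.image (fun A : {A // A ∈ 𝒞} => f A A.2) Set.univ).ncard,
      ⟨_, rfl, ?_⟩, ?_⟩
    · rw [hiff]
      intro x hx
      obtain ⟨A, hA, hxA⟩ := hcov hx
      rw [hf A hA] at hxA
      simp only [Set.mem_iUnion]
      exact ⟨f A hA, ⟨⟨A, hA⟩, trivial, rfl⟩, hxA.1⟩
    · calc (Set.image (fun A : {A // A ∈ 𝒞} => f A A.2) Set.univ).ncard
          ≤ (Set.univ : Set {A // A ∈ 𝒞}).ncard := Set.ncard_image_le Set.finite_univ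
        _ = 𝒞.ncard := by
            rw [Set.ncard_univ, Nat.card_coe_set_eq]
  -- nonemptiness of the first set
  have hne1 : {k | ∃ X : Set V, X.ncard = k ∧ T ⊆ simpleClosure F X}.Nonempty :=
    ⟨(Set.univ : Set V).ncard, Set.univ, rfl, hfeas⟩
  obtain ⟨k0, hk0, _⟩ := h1 _ hne1.some_mem
  have hne2 : {k | ∃ 𝒞 : Set (Set V), 𝒞.ncard = k ∧
        (∀ A ∈ 𝒞, ∃ v : V, A = reach F v ∩ T) ∧ T ⊆ ⋃₀ 𝒞}.Nonempty := ⟨k0, hk0⟩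
  apply le_antisymm
  · obtain ⟨k', hk', hle⟩ := h2 _ (Nat.sInf_mem hne2)
    exact le_trans (Nat.sInf_le hk') hle
  · obtain ⟨k', hk', hle⟩ := h1 _ (Nat.sInf_mem hne1)
    exact le_trans (Nat.sInf_le hk') hle
end

section
/- Deterministic LP rounding correctness (feasibility): Suppose nonnegative reals (y_j)_{j∈V} and (z_L)_{L∈LS} satisfy, for every i ∈ T, y_i + Σ_{L : (L→i)∈F} z_L ≥ 1, and z_L ≤ y_j for every j ∈ L whenever (L→i) ∈ F with i ∈ T. Let f ≥ max over i ∈ T of the number of FDs with right-hand side i. Then the set I = {j ∈ V : y_j ≥ 1/(f+1)} satisfies T ⊆ one-step-closure(I). -/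
open Finset

/-- Deterministic LP rounding feasibility: if `(y, z)` satisfies the 1-round TCAND LP
constraints and each target is the right-hand side of at most `f` FDs, then the set
`I = {j : y j ≥ 1/(f+1)}` has its one-step closure containing `T`. -/
theorem stmt7 {V : Type*} [Fintype V] [DecidableEq V]
    (F : Finset (Finset V × V)) (T : Finset V)
    (htriv : ∀ i : V, (({i} : Finset V), i) ∈ F)
    (y : V → ℝ) (z : Finset V → ℝ)
    (hynn : ∀ j, 0 ≤ y j) (hznn : ∀ L, 0 ≤ z L)
    (f : ℕ)
    (hf : ∀ i ∈ T, (F.filter (fun p => p.2 = i)).card ≤ f)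
    (hcov : ∀ i ∈ T,
      1 ≤ y i + ∑ L ∈ (F.filter (fun p => p.2 = i)).image Prod.fst, z L)
    (hz : ∀ p ∈ F, p.2 ∈ T → ∀ j ∈ p.1, z p.1 ≤ y j) :
    T ⊆ (Finset.univ.filter (fun j => 1 / ((f : ℝ) + 1) ≤ y j)) ∪
      (F.filter (fun p => p.1 ⊆ Finset.univ.filter (fun j => 1 / ((f : ℝ) + 1) ≤ y j))).image
        Prod.snd := by
  intro i hi
  have hfpos : (0:ℝ) < (f:ℝ) + 1 := by positivity
  by_cases hyi : 1 / ((f : ℝ) + 1) ≤ y i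
  · exact Finset.mem_union_left _ (Finset.mem_filter.mpr ⟨Finset.mem_univ _, hyi⟩)
  · push_neg at hyi
    -- there exists L with z L > 1/(f+1)
    have hcard : ((F.filter (fun p => p.2 = i)).image Prod.fst).card ≤ f :=
      le_trans (Finset.card_image_le) (hf i hi)
    have hex : ∃ L ∈ (F.filter (fun p => p.2 = i)).image Prod.fst,
        1 / ((f : ℝ) + 1) ≤ z L := by
      by_contra h
      push_neg at h
      have hsum : ∑ L ∈ (F.filter (fun p => p.2 = i)).image Prod.fst, z L ≤
          ((F.filter (fun p => p.2 = i)).image Prod.fst).card * (1 / ((f : ℝ) + 1)) := by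
        apply le_trans (Finset.sum_le_card_nsmul _ _ (1 / ((f : ℝ) + 1))
          (fun L hL => le_of_lt (h L hL)))
        simp [nsmul_eq_mul]
      have hle : (((F.filter (fun p => p.2 = i)).image Prod.fst).card : ℝ) ≤ f := by
        exact_mod_cast hcard
      have : ∑ L ∈ (F.filter (fun p => p.2 = i)).image Prod.fst, z L ≤
          (f : ℝ) * (1 / ((f : ℝ) + 1)) := by
        refine hsum.trans ?_
        apply mul_le_mul_of_nonneg_right hle
        positivity
      have h1 := hcov i hi
      have : (1:ℝ) < 1 / ((f:ℝ)+1) + (f:ℝ) * (1 / ((f:ℝ)+1)) := by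
        calc (1:ℝ) ≤ y i + ∑ L ∈ (F.filter (fun p => p.2 = i)).image Prod.fst, z L := h1
        _ < 1 / ((f:ℝ)+1) + (f:ℝ) * (1 / ((f:ℝ)+1)) := by
            apply add_lt_add_of_lt_of_le hyi this
      have heq : 1 / ((f:ℝ)+1) + (f:ℝ) * (1 / ((f:ℝ)+1)) = 1 := by
        field_simp; ring
      rw [heq] at this
      exact lt_irrefl _ this
    obtain ⟨L, hL, hzL⟩ := hex
    obtain ⟨p, hpF, hpfst⟩ := Finset.mem_image.mp hL
    obtain ⟨hpF', hpsnd⟩ := Finset.mem_filter.mp hpF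
    apply Finset.mem_union_right
    apply Finset.mem_image.mpr
    refine ⟨p, Finset.mem_filter.mpr ⟨hpF', ?_⟩, hpsnd⟩
    intro j hj
    refine Finset.mem_filter.mpr ⟨Finset.mem_univ _, ?_⟩
    have := hz p hpF' (hpsnd ▸ hi) j hj
    rw [hpfst] at this
    exact le_trans hzL this
end
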